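/- arXiv:2507.06604 — 6 statements merged into one kernel-verified Lean document; each statement's English description precedes it below -/
import Mathlib

section
/- det A' = τ^{n-1}·(2τ − τ₀), where det A' is the determinant of the 2n×2n matrix A'. -/
/-!
The block `a₂₂ = ψ₁ (1 + z z*)` is invertible, with `(1 + z z*)⁻¹ = 1 - ψ₁⁻¹ z z*`
(Sherman–Morrison, since `z* z = ψ₁ - 1`), so `det A' = det a₂₂ · det S` for the Schur complement
`S = a₁₁ - a₁₂ a₂₂⁻¹ a₂₁`. Using only the pairings `z* z = ψ₁ - 1`, `ξ ξ* = ψ₂ - |s_xz|²` and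
`ξ z = s - s_xz`, the complement collapses to `ψ₂ · 1` plus a rank-two matrix, and Sylvester's
identity `cᵏ det (c + U V) = cⁿ det (c + V U)` turns its determinant into a `2 × 2` one.
When `ψ₂ = 0` we have `ξ = 0` and `s = 0`, so the first block row of `A'` vanishes.
-/

open Matrix Polynomial

namespace Matrix

section CommRing

variable {R : Type*} [CommRing R] {ι κ : Type*} [Fintype ι] [DecidableEq ι] [Fintype κ]
  [DecidableEq κ]

theorem det_neg_smul_one_sub (c : R) (M : Matrix ι ι R) :
    det (scalar ι (-c) - M) = (-1) ^ Fintype.card ι * det (c • 1 + M) := by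
  rw [← det_neg]
  congr 1
  ext i j
  simp only [scalar_apply, diagonal_apply, sub_apply, neg_apply, add_apply, smul_apply,
    one_apply, smul_eq_mul]
  split_ifs <;> ring

theorem pow_mul_det_smul_one_add_mul (c : R) (U : Matrix ι κ R) (V : Matrix κ ι R) :
    c ^ Fintype.card κ * det (c • 1 + U * V) = c ^ Fintype.card ι * det (c • 1 + V * U) := by
  have h := congrArg (eval (-c)) (charpoly_mul_comm' U V)
  simp only [eval_mul, eval_pow, eval_X, eval_charpoly, det_neg_smul_one_sub] at h
  have hsign : IsUnit ((-1 : R) ^ (Fintype.card ι + Fintype.card κ)) := isUnit_neg_one.pow _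
  apply hsign.mul_left_cancel
  linear_combination h

theorem det_one_add_vecMulVec (u v : ι → R) : det (1 + vecMulVec u v) = 1 + v ⬝ᵥ u := by
  rw [vecMulVec_eq Unit, det_one_add_replicateCol_mul_replicateRow]

theorem sq_mul_det_smul_one_add_vecMulVec_add_vecMulVec (c : R) (u₁ u₂ v₁ v₂ : ι → R) :
    c ^ 2 * det (c • 1 + (vecMulVec u₁ v₁ + vecMulVec u₂ v₂)) =
      c ^ Fintype.card ι * ((c + v₁ ⬝ᵥ u₁) * (c + v₂ ⬝ᵥ u₂) - (v₁ ⬝ᵥ u₂) * (v₂ ⬝ᵥ u₁)) := by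
  have hUV : vecMulVec u₁ v₁ + vecMulVec u₂ v₂ = (of ![u₁, u₂])ᵀ * of ![v₁, v₂] := by
    ext i j
    simp [mul_apply, Fin.sum_univ_two, vecMulVec_apply]
  rw [hUV, ← Fintype.card_fin 2, pow_mul_det_smul_one_add_mul, det_fin_two]
  simp [vecMul, dotProduct]

end CommRing

section Field

variable {K : Type*} [Field K] {ι : Type*} [Fintype ι] [DecidableEq ι]

theorem one_add_vecMulVec_mul_one_sub_vecMulVec {a : K} (ha : a ≠ 0) {u v : ι → K}
    (h : v ⬝ᵥ u = a - 1) : (1 + vecMulVec u v) * (1 - a⁻¹ • vecMulVec u v) = 1 := by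
  simp only [mul_sub, add_mul, Matrix.mul_one, Matrix.one_mul, Matrix.mul_smul,
    vecMulVec_mul_vecMulVec, h, vecMulVec_smul]
  match_scalars <;> field_simp
  ring

end Field

end Matrix

theorem Complex.star_dotProduct_self {ι : Type*} [Fintype ι] (v : ι → ℂ) :
    star v ⬝ᵥ v = ∑ i, (Complex.normSq (v i) : ℂ) := by
  simp [dotProduct, Complex.normSq_eq_conj_mul_self]

theorem Complex.eq_zero_of_sum_normSq_add_normSq_eq_zero {ι : Type*} [Fintype ι] {v : ι → ℂ}
    {c : ℂ} (h : ∑ i, Complex.normSq (v i) + Complex.normSq c = 0) : v = 0 ∧ c = 0 := by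
  have hv : ∀ i ∈ Finset.univ, 0 ≤ Complex.normSq (v i) := fun i _ => Complex.normSq_nonneg _
  obtain ⟨hv0, hc0⟩ :=
    (add_eq_zero_iff_of_nonneg (Finset.sum_nonneg hv) (Complex.normSq_nonneg c)).mp h
  exact ⟨funext fun i => Complex.normSq_eq_zero.mp <|
    (Finset.sum_eq_zero_iff_of_nonneg hv).mp hv0 i (Finset.mem_univ i),
    Complex.normSq_eq_zero.mp hc0⟩

variable {K : Type*} [Field K] {ι : Type*} [Fintype ι] [DecidableEq ι]

/-- The paper's `A'` for `z' = z̄`, `w = ξᵀ`, `w' = ξ̄ᵀ`, `c = s_xz`, `c' = s̄_xz`; the conjugated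
data are taken as independent variables. -/
def aPrime (z w z' w' : ι → K) (c c' ψ₁ ψ₂ : K) : Matrix (ι ⊕ ι) (ι ⊕ ι) K :=
  fromBlocks
    (ψ₂ • 1 - c • vecMulVec z' w' - c' • vecMulVec w z + ψ₁ • vecMulVec w w')
    (ψ₁ • vecMulVec w z' + vecMulVec z' w - c • vecMulVec z' z')
    (ψ₁ • vecMulVec z w' + vecMulVec w' z - c' • vecMulVec z z)
    (ψ₁ • (1 + vecMulVec z z'))

section Pairings

variable {z w z' w' : ι → K} {c c' s s' ψ₁ ψ₂ : K}

theorem schurComplement_aPrime_eq (hψ₁ : ψ₁ ≠ 0) (hz : z' ⬝ᵥ z = ψ₁ - 1)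
    (hw : w ⬝ᵥ w' = ψ₂ - c' * c) (hwz : w ⬝ᵥ z = s - c) (hwz' : z' ⬝ᵥ w' = s' - c') :
    (ψ₂ • 1 - c • vecMulVec z' w' - c' • vecMulVec w z + ψ₁ • vecMulVec w w') -
        (ψ₁ • vecMulVec w z' + vecMulVec z' w - c • vecMulVec z' z') *
          (ψ₁⁻¹ • (1 - ψ₁⁻¹ • vecMulVec z z')) *
          (ψ₁ • vecMulVec z w' + vecMulVec w' z - c' • vecMulVec z z) =
      ψ₂ • 1 + (vecMulVec w (w' - (s' / ψ₁) • z) +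
        vecMulVec z' (((s' * s - ψ₁ * ψ₂) / ψ₁ ^ 2) • z - (s / ψ₁) • w')) := by
  simp only [mul_sub, mul_add, sub_mul, add_mul, Matrix.smul_mul, Matrix.mul_smul,
    Matrix.mul_one, vecMulVec_mul_vecMulVec, vecMulVec_smul, vecMulVec_sub, hz, hw, hwz, hwz',
    smul_smul, smul_sub]
  match_scalars <;> field_simp <;> ring

theorem det_aPrime [Nonempty ι] (hψ₁ : ψ₁ ≠ 0) (hψ₂ : ψ₂ ≠ 0) (hz : z' ⬝ᵥ z = ψ₁ - 1)
    (hw : w ⬝ᵥ w' = ψ₂ - c' * c) (hwz : w ⬝ᵥ z = s - c) (hwz' : z' ⬝ᵥ w' = s' - c') :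
    (aPrime z w z' w' c c' ψ₁ ψ₂).det =
      (ψ₁ * ψ₂) ^ (Fintype.card ι - 1) * (2 * (ψ₁ * ψ₂) - s' * s) := by
  have hinv : ψ₁ • (1 + vecMulVec z z') * (ψ₁⁻¹ • (1 - ψ₁⁻¹ • vecMulVec z z')) = 1 := by
    rw [Matrix.smul_mul, Matrix.mul_smul, smul_smul, mul_inv_cancel₀ hψ₁, one_smul,
      one_add_vecMulVec_mul_one_sub_vecMulVec hψ₁ hz]
  let := invertibleOfRightInverse _ _ hinv
  have hS := sq_mul_det_smul_one_add_vecMulVec_add_vecMulVec ψ₂ w z' (w' - (s' / ψ₁) • z)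
    (((s' * s - ψ₁ * ψ₂) / ψ₁ ^ 2) • z - (s / ψ₁) • w')
  simp only [sub_dotProduct, smul_dotProduct, smul_eq_mul, dotProduct_comm w' w,
    dotProduct_comm z w, dotProduct_comm w' z', dotProduct_comm z z', hz, hw, hwz, hwz'] at hS
  rw [aPrime, det_fromBlocks₂₂, invOf_eq_right_inv hinv, schurComplement_aPrime_eq hψ₁ hz hw hwz hwz',
    det_smul, det_one_add_vecMulVec, hz]
  obtain ⟨m, hm⟩ : ∃ m, Fintype.card ι = m + 1 :=
    ⟨_, (Nat.succ_pred_eq_of_pos Fintype.card_pos).symm⟩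
  rw [hm] at hS
  rw [hm, Nat.add_sub_cancel]
  generalize det (ψ₂ • (1 : Matrix ι ι K) + _) = D at hS ⊢
  apply mul_left_cancel₀ (mul_ne_zero (pow_ne_zero 2 hψ₂) hψ₁)
  field_simp at hS
  linear_combination ψ₁ ^ m * hS

theorem det_aPrime_zero [Nonempty ι] (z z' w' : ι → K) (c' ψ₁ : K) :
    (aPrime z 0 z' w' 0 c' ψ₁ 0).det = 0 := by
  simp [aPrime, det_fromBlocks_zero₁₂]

end Pairings

theorem stmt_0 (n : ℕ) (hn : 1 ≤ n) (s : ℂ) (z ξ : Fin n → ℂ) :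
    let sxz : ℂ := s - ∑ i, ξ i * z i
    let ψ₁r : ℝ := (∑ i, Complex.normSq (z i)) + 1
    let ψ₂r : ℝ := (∑ i, Complex.normSq (ξ i)) + Complex.normSq sxz
    let τr : ℝ := ψ₁r * ψ₂r
    let τ₀r : ℝ := Complex.normSq s
    let ψ₁ : ℂ := (ψ₁r : ℂ)
    let ψ₂ : ℂ := (ψ₂r : ℂ)
    let τ : ℂ := (τr : ℂ)
    let τ₀ : ℂ := (τ₀r : ℂ)
    let a11 : Matrix (Fin n) (Fin n) ℂ :=
      ψ₂ • 1 - sxz • Matrix.vecMulVec (star z) (star ξ)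
        - star sxz • Matrix.vecMulVec ξ z + ψ₁ • Matrix.vecMulVec ξ (star ξ)
    let a12 : Matrix (Fin n) (Fin n) ℂ :=
      ψ₁ • Matrix.vecMulVec ξ (star z) + Matrix.vecMulVec (star z) ξ
        - sxz • Matrix.vecMulVec (star z) (star z)
    let a21 : Matrix (Fin n) (Fin n) ℂ :=
      ψ₁ • Matrix.vecMulVec z (star ξ) + Matrix.vecMulVec (star ξ) z
        - star sxz • Matrix.vecMulVec z z
    let a22 : Matrix (Fin n) (Fin n) ℂ := ψ₁ • (1 + Matrix.vecMulVec z (star z))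
    let A' : Matrix (Fin n ⊕ Fin n) (Fin n ⊕ Fin n) ℂ := Matrix.fromBlocks a11 a12 a21 a22
    let b : Fin n ⊕ Fin n → ℂ :=
      Sum.elim (fun i => ψ₂ * star (z i) - ψ₁ * star sxz * ξ i)
               (fun i => ψ₁ * (star (ξ i) - star sxz * z i))
    A'.det = τ ^ (n - 1) * (2 * τ - τ₀) := by
  intro sxz ψ₁r ψ₂r τr τ₀r ψ₁ ψ₂ τ τ₀ _ _ _ _ _ _
  have : Nonempty (Fin n) := ⟨⟨0, hn⟩⟩
  have hτ : τ = ψ₁ * ψ₂ := by push_cast [τ, τr, ψ₁, ψ₂]; rfl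
  have hτ₀ : τ₀ = star s * s := by simp [τ₀, τ₀r, Complex.normSq_eq_conj_mul_self]
  have hξz : ξ ⬝ᵥ z = s - sxz := (sub_sub_cancel s _).symm
  show (aPrime z ξ (star z) (star ξ) sxz (star sxz) ψ₁ ψ₂).det = τ ^ (n - 1) * (2 * τ - τ₀)
  rw [hτ, hτ₀]
  rcases eq_or_ne ψ₂r 0 with hψ₂ | hψ₂
  · obtain ⟨rfl, hsxz⟩ := Complex.eq_zero_of_sum_normSq_add_normSq_eq_zero hψ₂
    have hs : s = 0 := by simpa [hsxz] using hξz.symm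
    have hψ₂' : ψ₂ = 0 := by simp [ψ₂, hψ₂]
    rw [hψ₂', hsxz, hs, det_aPrime_zero]
    simp
  · have hψ₁ : ψ₁ ≠ 0 :=
      Complex.ofReal_ne_zero.mpr (add_pos_of_nonneg_of_pos
        (Finset.sum_nonneg fun i _ => Complex.normSq_nonneg (z i)) one_pos).ne'
    have hz : star z ⬝ᵥ z = ψ₁ - 1 := by simp [ψ₁, ψ₁r, Complex.star_dotProduct_self]
    have hξ : ξ ⬝ᵥ star ξ = ψ₂ - star sxz * sxz := by
      rw [dotProduct_comm]
      simp [ψ₂, ψ₂r, Complex.star_dotProduct_self, Complex.normSq_eq_conj_mul_self]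
    have hξz' : star z ⬝ᵥ star ξ = star s - star sxz := by rw [star_dotProduct_star, hξz, star_sub]
    rw [det_aPrime hψ₁ (Complex.ofReal_ne_zero.mpr hψ₂) hz hξ hξz hξz', Fintype.card_fin]
end

section
/- The function f(t) = ( (a + (t − τ₀)ⁿ)^{1/n} / ( t·(t − τ₀) ) )^{1/2} is differentiable on the interval (τ₀, ∞), and for every t > τ₀ it satisfies the ordinary differential equation 2·f'(t)·f(t)^{2n−1}·tⁿ·(t − τ₀) + f(t)^{2n}·t^{n−1}·(2t − τ₀) = 1. -/
/-!
Put `G = (a + (t - τ₀) ^ n) ^ (1 / n)`, `w = t (t - τ₀)` and `F = f ^ 2 = G / w`. Since `2 f' f = F'`,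
the left side is `t ^ (n - 1) F ^ (n - 1) (F' w + F w')`, and `F' w + F w' = G'` by the quotient
rule. Differentiating `G ^ n = a + (t - τ₀) ^ n` gives `G ^ (n - 1) G' = (t - τ₀) ^ (n - 1)`, so the
left side is `(t (t - τ₀) / w) ^ (n - 1) = 1`.
-/

open Real

theorem HasDerivAt.rpow_inv_natCast {u : ℝ → ℝ} {u' t : ℝ} {n : ℕ} (hu : HasDerivAt u u' t)
    (hpos : 0 < u t) (hn : n ≠ 0) :
    HasDerivAt (fun s => u s ^ (n⁻¹ : ℝ)) (u' / (n * (u t ^ (n⁻¹ : ℝ)) ^ (n - 1))) t := by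
  convert hu.rpow_const (p := (n⁻¹ : ℝ)) (Or.inl hpos.ne') using 1
  have hroot : (u t ^ (n⁻¹ : ℝ)) ^ (n - 1) * u t ^ (n⁻¹ : ℝ) = u t := by
    rw [← pow_succ, Nat.sub_add_cancel (Nat.one_le_iff_ne_zero.mpr hn),
      rpow_inv_natCast_pow hpos.le hn]
  have hr : 0 < u t ^ (n⁻¹ : ℝ) := rpow_pos_of_pos hpos _
  rw [rpow_sub_one hpos.ne']
  generalize u t ^ (n⁻¹ : ℝ) = r at hroot hr ⊢
  rw [← hroot]
  field_simp

theorem two_mul_div_two_sqrt_mul_sqrt_pow {F : ℝ} (hF : 0 < F) (F' : ℝ) (m : ℕ) :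
    2 * (F' / (2 * √F)) * √F ^ (2 * m + 1) = F' * F ^ m := by
  have hs : 0 < √F := sqrt_pos.mpr hF
  rw [pow_succ, pow_mul, sq_sqrt hF.le]
  field_simp

theorem stmt_3 (n : ℕ) (hn : 1 ≤ n) (τ₀ : ℝ) (hτ₀ : 0 < τ₀) (a : ℝ) (ha : 0 ≤ a) :
    let f : ℝ → ℝ := fun t =>
      Real.sqrt ((a + (t - τ₀) ^ n) ^ ((1 : ℝ) / n) / (t * (t - τ₀)))
    ∀ t : ℝ, τ₀ < t →
      DifferentiableAt ℝ f t ∧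
        2 * deriv f t * f t ^ (2 * n - 1) * t ^ n * (t - τ₀)
          + f t ^ (2 * n) * t ^ (n - 1) * (2 * t - τ₀) = 1 := by
  intro f t ht
  have hf : f = fun t => √((a + (t - τ₀) ^ n) ^ (n⁻¹ : ℝ) / (t * (t - τ₀))) := by
    simp only [f, one_div]
  rw [hf]
  obtain ⟨m, rfl⟩ : ∃ m, n = m + 1 := ⟨n - 1, (Nat.sub_add_cancel hn).symm⟩
  have ht₀ : 0 < t - τ₀ := sub_pos.mpr ht
  have htpos : 0 < t := hτ₀.trans ht
  have hw : 0 < t * (t - τ₀) := mul_pos htpos ht₀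
  have hu : 0 < a + (t - τ₀) ^ (m + 1) := by positivity
  have hG : 0 < (a + (t - τ₀) ^ (m + 1)) ^ ((m + 1 : ℕ)⁻¹ : ℝ) := rpow_pos_of_pos hu _
  have hGderiv : HasDerivAt (fun s => (a + (s - τ₀) ^ (m + 1)) ^ ((m + 1 : ℕ)⁻¹ : ℝ))
      ((t - τ₀) ^ m / ((a + (t - τ₀) ^ (m + 1)) ^ ((m + 1 : ℕ)⁻¹ : ℝ)) ^ m) t :=
    ((((hasDerivAt_id' t).sub_const τ₀).fun_pow (m + 1)).const_add a |>.rpow_inv_natCast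
      hu m.add_one_ne_zero).congr_deriv <| by
      rw [Nat.add_sub_cancel, mul_one, mul_div_mul_left _ _ (by positivity)]
  have hwderiv : HasDerivAt (fun s => s * (s - τ₀)) (2 * t - τ₀) t :=
    ((hasDerivAt_id' t).fun_mul ((hasDerivAt_id' t).sub_const τ₀)).congr_deriv (by ring)
  have hF := (hGderiv.fun_div hwderiv hw.ne').sqrt (div_pos hG hw).ne'
  refine ⟨hF.differentiableAt, ?_⟩
  rw [hF.deriv, show 2 * (m + 1) - 1 = 2 * m + 1 by omega, Nat.add_sub_cancel,
    two_mul_div_two_sqrt_mul_sqrt_pow (div_pos hG hw), pow_mul, sq_sqrt (div_pos hG hw).le]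
  generalize (a + (t - τ₀) ^ (m + 1)) ^ ((m + 1 : ℕ)⁻¹ : ℝ) = G at hG ⊢
  simp only [div_pow, mul_pow]
  field_simp
  ring
end

section
/- Assume s ≠ 0 (so that τ ≥ τ₀ = |s|² > 0). Then the 2n×2n matrix A = τ^{−1/2}·A' − (1/2)·τ^{−3/2}·(b·b*) satisfies Aᵀ·S·A = S, i.e. A belongs to the complex symplectic group Sp(2n, ℂ). (This is the value c·A' + c₁·b·b* for c = f(τ), c₁ = f'(τ) with f(t) = t^{−1/2}, and expresses that the corresponding Ricci-flat Kähler metric is hyperkähler.) -/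
/-!
With `c = τ^(-1/2)` and `c₁ = -c³/2` we have `A = c A' + c₁ b b̄ᵀ`. The symplectic form `J = -S`
is alternating, so the rank-one term changes `c² A'ᵀ J A'` only by `c c₁ (v ∧ b̄)`, where
`v = A'ᵀ J b` and `u ∧ v = u vᵀ - v uᵀ`. Two polynomial identities in the entries,
`ψ₁ (A'ᵀ J A' - τ J) = w ∧ b̄` and `A'ᵀ J b = 2 ψ₂ w - s̄ b̄` for an explicit vector `w`, give
`Aᵀ J A = c² τ J + (c⁴ ψ₂ + 2 c c₁ ψ₂) (w ∧ b̄)`, and both coefficients are right exactly because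
`c² τ = 1` and `2 c₁ = -c³`, i.e. `c = f(τ)` and `c₁ = f'(τ)` for `f(t) = t^(-1/2)`.
-/

open Matrix

section RankOne

variable {R : Type*} [CommRing R] {ι κ : Type*}

lemma Matrix.vecMulVec_sumElim (u₁ u₂ : ι → R) (v₁ v₂ : κ → R) :
    vecMulVec (Sum.elim u₁ u₂) (Sum.elim v₁ v₂) =
      fromBlocks (vecMulVec u₁ v₁) (vecMulVec u₁ v₂) (vecMulVec u₂ v₁) (vecMulVec u₂ v₂) := by
  ext (i | i) (j | j) <;> rfl

lemma Matrix.vecMulVec_mulVec_eq_smul [Fintype κ] (u : ι → R) (v w : κ → R) :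
    vecMulVec u v *ᵥ w = (v ⬝ᵥ w) • u := by
  rw [vecMulVec_mulVec, op_smul_eq_smul]

variable [Fintype ι] [DecidableEq ι]

lemma Matrix.vecMul_J (u : ι ⊕ ι → R) : u ᵥ* J ι R = -(J ι R *ᵥ u) := by
  rw [← mulVec_transpose, J_transpose, neg_mulVec]

lemma Matrix.dotProduct_J_mulVec_self (u : ι ⊕ ι → R) : u ⬝ᵥ (J ι R *ᵥ u) = 0 := by
  simp [J, fromBlocks_mulVec, dotProduct, Fintype.sum_sum_type, mul_comm, neg_mulVec]

lemma Matrix.transpose_mul_J_mul_add_vecMulVec (A : Matrix (ι ⊕ ι) (ι ⊕ ι) R)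
    (u w : ι ⊕ ι → R) :
    (A + vecMulVec u w)ᵀ * J ι R * (A + vecMulVec u w) =
      Aᵀ * J ι R * A + vecMulVec (Aᵀ *ᵥ (J ι R *ᵥ u)) w - vecMulVec w (Aᵀ *ᵥ (J ι R *ᵥ u)) := by
  have h₁ : Aᵀ * J ι R * vecMulVec u w = vecMulVec (Aᵀ *ᵥ (J ι R *ᵥ u)) w := by
    rw [mul_vecMulVec, mulVec_mulVec]
  have h₂ : vecMulVec w u * J ι R * A = -vecMulVec w (Aᵀ *ᵥ (J ι R *ᵥ u)) := by
    rw [vecMulVec_mul, vecMulVec_mul, vecMul_J, neg_vecMul, ← mulVec_transpose, vecMulVec_neg]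
  have h₃ : vecMulVec w u * J ι R * vecMulVec u w = 0 := by
    rw [vecMulVec_mul, vecMulVec_mul_vecMulVec, ← dotProduct_mulVec, dotProduct_J_mulVec_self,
      zero_smul, vecMulVec_zero]
  rw [transpose_add, transpose_vecMulVec, add_mul, add_mul, mul_add, mul_add, h₁, h₂, h₃]
  abel

end RankOne

section Ansatz

variable {R : Type*} [CommRing R] {ι : Type*} [Fintype ι] [DecidableEq ι]

/- The complex conjugates `z̄, ξ̄, s̄_xz` of the paper are independent variables `zc, ξc, σc`
here, so that all identities below are polynomial identities over a commutative ring; the only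
relations used are `z ⬝ᵥ zc = ψ₁ - 1` and `ξ ⬝ᵥ ξc = ψ₂ - σ σc`. The paper's `b` is
`ansatzVector z zc ξ ξc σc ψ₁ ψ₂`, and `b̄` is `ansatzVector zc z ξc ξ σ ψ₁ ψ₂`. -/
def ansatzMatrix (z zc ξ ξc : ι → R) (σ σc ψ₁ ψ₂ : R) : Matrix (ι ⊕ ι) (ι ⊕ ι) R :=
  fromBlocks (ψ₂ • 1 - σ • vecMulVec zc ξc - σc • vecMulVec ξ z + ψ₁ • vecMulVec ξ ξc)
    (ψ₁ • vecMulVec ξ zc + vecMulVec zc ξ - σ • vecMulVec zc zc)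
    (ψ₁ • vecMulVec z ξc + vecMulVec ξc z - σc • vecMulVec z z)
    (ψ₁ • (1 + vecMulVec z zc))

def ansatzVector (z zc ξ ξc : ι → R) (σc ψ₁ ψ₂ : R) : ι ⊕ ι → R :=
  Sum.elim (ψ₂ • zc - (ψ₁ * σc) • ξ) (ψ₁ • (ξc - σc • z))

/- `σc + zc ⬝ᵥ ξc` is the conjugate `s̄` of `s = σ + ξ ⬝ᵥ z`. -/
def ansatzDefect (z zc ξc : ι → R) (σc ψ₁ : R) : ι ⊕ ι → R :=
  Sum.elim ((σc + zc ⬝ᵥ ξc) • z - ψ₁ • ξc) 0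

variable {z zc ξ ξc : ι → R} {σ σc ψ₁ ψ₂ : R}

lemma ansatzMatrix_transpose_mulVec_J_mulVec (hz : z ⬝ᵥ zc = ψ₁ - 1)
    (hξ : ξ ⬝ᵥ ξc = ψ₂ - σ * σc) :
    (ansatzMatrix z zc ξ ξc σ σc ψ₁ ψ₂)ᵀ *ᵥ (J ι R *ᵥ ansatzVector z zc ξ ξc σc ψ₁ ψ₂) =
      (2 * ψ₂) • ansatzDefect z zc ξc σc ψ₁
        - (σc + zc ⬝ᵥ ξc) • ansatzVector zc z ξc ξ σ ψ₁ ψ₂ := by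
  have hz' : zc ⬝ᵥ z = ψ₁ - 1 := by rw [dotProduct_comm, hz]
  have hξ' : ξc ⬝ᵥ ξ = ψ₂ - σ * σc := by rw [dotProduct_comm, hξ]
  have hzξ : ξ ⬝ᵥ z = z ⬝ᵥ ξ := dotProduct_comm _ _
  have hzξc : ξc ⬝ᵥ zc = zc ⬝ᵥ ξc := dotProduct_comm _ _
  simp only [ansatzDefect, ansatzMatrix, ansatzVector, J, fromBlocks_transpose, fromBlocks_mulVec]
  ext (i | i) <;>
  · simp only [transpose_add, transpose_sub, transpose_smul, transpose_one, transpose_vecMulVec,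
      Sum.elim_comp_inl, Sum.elim_comp_inr, Sum.elim_inl, Sum.elim_inr, add_mulVec, sub_mulVec,
      neg_mulVec, one_mulVec, zero_mulVec, smul_mulVec, mulVec_sub, mulVec_smul,
      vecMulVec_mulVec_eq_smul, dotProduct_add, dotProduct_neg, dotProduct_smul, smul_eq_mul,
      smul_zero, smul_neg, smul_add, sub_self, sub_neg_eq_add, zero_add, add_zero, zero_sub,
      mul_zero, Pi.add_apply, Pi.sub_apply, Pi.neg_apply, Pi.smul_apply, Pi.zero_apply,
      hz, hz', hξ, hξ', hzξ, hzξc]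
    ring

lemma ansatzMatrix_transpose_mul_J_mul (hz : z ⬝ᵥ zc = ψ₁ - 1) (hξ : ξ ⬝ᵥ ξc = ψ₂ - σ * σc) :
    ψ₁ • ((ansatzMatrix z zc ξ ξc σ σc ψ₁ ψ₂)ᵀ * J ι R * ansatzMatrix z zc ξ ξc σ σc ψ₁ ψ₂) =
      (ψ₁ * (ψ₁ * ψ₂)) • J ι R
        + (vecMulVec (ansatzDefect z zc ξc σc ψ₁) (ansatzVector zc z ξc ξ σ ψ₁ ψ₂)
          - vecMulVec (ansatzVector zc z ξc ξ σ ψ₁ ψ₂) (ansatzDefect z zc ξc σc ψ₁)) := by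
  simp only [ansatzDefect, ansatzMatrix, ansatzVector, J, vecMulVec_sumElim, fromBlocks_transpose,
    fromBlocks_multiply, fromBlocks_smul, fromBlocks_neg, fromBlocks_add, sub_eq_add_neg,
    fromBlocks_inj]
  have hz' : zc ⬝ᵥ z = ψ₁ - 1 := by rw [dotProduct_comm, hz]
  have hξ' : ξc ⬝ᵥ ξ = ψ₂ - σ * σc := by rw [dotProduct_comm, hξ]
  have hzξ : ξ ⬝ᵥ z = z ⬝ᵥ ξ := dotProduct_comm _ _
  have hzξc : ξc ⬝ᵥ zc = zc ⬝ᵥ ξc := dotProduct_comm _ _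
  refine ⟨?_, ?_, ?_, ?_⟩ <;>
  · simp only [transpose_add, transpose_neg, transpose_smul, transpose_one, transpose_vecMulVec,
      add_mul, mul_add, neg_mul, mul_neg, smul_mul_assoc, mul_smul_comm, vecMulVec_mul_vecMulVec,
      Matrix.one_mul, Matrix.mul_one, Matrix.mul_zero, vecMulVec_smul, smul_vecMulVec,
      vecMulVec_add, add_vecMulVec, vecMulVec_neg, neg_vecMulVec, smul_add, smul_neg, smul_smul,
      neg_neg, vecMulVec_zero, zero_vecMulVec, add_zero, zero_add, neg_zero, smul_zero,
      neg_add_rev, hz, hz', hξ, hξ', hzξ, hzξc]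
    match_scalars <;> ring

theorem ansatz_mem_symplecticGroup (hz : z ⬝ᵥ zc = ψ₁ - 1) (hξ : ξ ⬝ᵥ ξc = ψ₂ - σ * σc)
    {c d : R} (hc : c ^ 2 * (ψ₁ * ψ₂) = 1) (hd : 2 * d = c ^ 3) :
    c • ansatzMatrix z zc ξ ξc σ σc ψ₁ ψ₂
        - d • vecMulVec (ansatzVector z zc ξ ξc σc ψ₁ ψ₂) (ansatzVector zc z ξc ξ σ ψ₁ ψ₂)
      ∈ symplecticGroup ι R := by
  rw [SymplecticGroup.mem_iff', sub_eq_add_neg, ← neg_smul, ← smul_vecMulVec,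
    transpose_mul_J_mul_add_vecMulVec, transpose_smul, mulVec_smul, mulVec_smul, smul_mulVec,
    ansatzMatrix_transpose_mulVec_J_mulVec hz hξ]
  simp only [Matrix.smul_mul, Matrix.mul_smul, smul_smul, vecMulVec_smul, smul_vecMulVec,
    vecMulVec_sub, sub_vecMulVec]
  -- the defect identity is only known after scaling by `ψ₁`, and `c² = (c⁴ ψ₂) ψ₁`
  have hc₂ : c * c = c ^ 4 * ψ₂ * ψ₁ := by linear_combination (-c ^ 2) * hc
  rw [hc₂, ← smul_smul, ansatzMatrix_transpose_mul_J_mul hz hξ]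
  match_scalars
  · linear_combination (c ^ 2 * ψ₁ * ψ₂ + 1) * hc
  · linear_combination (-(c * ψ₂)) * hd
  · linear_combination (c * ψ₂) * hd
  · ring

end Ansatz

lemma Real.rpow_neg_one_half_sq_mul {t : ℝ} (ht : 0 < t) : (t ^ (-(1 : ℝ) / 2)) ^ 2 * t = 1 := by
  rw [← Real.rpow_natCast, ← Real.rpow_mul ht.le]
  norm_num [Real.rpow_neg_one, ht.ne']

lemma Real.rpow_neg_three_halves {t : ℝ} (ht : 0 ≤ t) :
    t ^ (-(3 : ℝ) / 2) = (t ^ (-(1 : ℝ) / 2)) ^ 3 := by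
  rw [← Real.rpow_natCast, ← Real.rpow_mul ht]
  norm_num

lemma Complex.ofReal_sum_normSq {ι : Type*} [Fintype ι] (v : ι → ℂ) :
    ((∑ i, Complex.normSq (v i) : ℝ) : ℂ) = v ⬝ᵥ star v := by
  simp [dotProduct, Complex.mul_conj]

lemma sum_normSq_add_normSq_sub_pos {ι : Type*} [Fintype ι] {s : ℂ} (hs : s ≠ 0) (ξ z : ι → ℂ) :
    0 < ∑ i, Complex.normSq (ξ i) + Complex.normSq (s - ∑ i, ξ i * z i) := by
  by_cases hξ : ξ = 0
  · simpa [hξ] using hs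
  · obtain ⟨i, hi⟩ := Function.ne_iff.mp hξ
    have hpos : 0 < ∑ i, Complex.normSq (ξ i) :=
      Finset.sum_pos' (fun j _ => Complex.normSq_nonneg _)
        ⟨i, Finset.mem_univ i, Complex.normSq_pos.mpr hi⟩
    exact add_pos_of_pos_of_nonneg hpos (Complex.normSq_nonneg _)

theorem stmt_7_general (n : ℕ) (s : ℂ) (hs : s ≠ 0) (z ξ : Fin n → ℂ) :
    let sxz : ℂ := s - ∑ i, ξ i * z i
    let ψ₁r : ℝ := (∑ i, Complex.normSq (z i)) + 1
    let ψ₂r : ℝ := (∑ i, Complex.normSq (ξ i)) + Complex.normSq sxz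
    let τr : ℝ := ψ₁r * ψ₂r
    let τ₀r : ℝ := Complex.normSq s
    let ψ₁ : ℂ := (ψ₁r : ℂ)
    let ψ₂ : ℂ := (ψ₂r : ℂ)
    let τ : ℂ := (τr : ℂ)
    let τ₀ : ℂ := (τ₀r : ℂ)
    let a11 : Matrix (Fin n) (Fin n) ℂ :=
      ψ₂ • 1 - sxz • Matrix.vecMulVec (star z) (star ξ)
        - star sxz • Matrix.vecMulVec ξ z + ψ₁ • Matrix.vecMulVec ξ (star ξ)
    let a12 : Matrix (Fin n) (Fin n) ℂ :=
      ψ₁ • Matrix.vecMulVec ξ (star z) + Matrix.vecMulVec (star z) ξ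
        - sxz • Matrix.vecMulVec (star z) (star z)
    let a21 : Matrix (Fin n) (Fin n) ℂ :=
      ψ₁ • Matrix.vecMulVec z (star ξ) + Matrix.vecMulVec (star ξ) z
        - star sxz • Matrix.vecMulVec z z
    let a22 : Matrix (Fin n) (Fin n) ℂ := ψ₁ • (1 + Matrix.vecMulVec z (star z))
    let A' : Matrix (Fin n ⊕ Fin n) (Fin n ⊕ Fin n) ℂ := Matrix.fromBlocks a11 a12 a21 a22
    let b : Fin n ⊕ Fin n → ℂ :=
      Sum.elim (fun i => ψ₂ * star (z i) - ψ₁ * star sxz * ξ i)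
               (fun i => ψ₁ * (star (ξ i) - star sxz * z i))
    let S : Matrix (Fin n ⊕ Fin n) (Fin n ⊕ Fin n) ℂ := Matrix.fromBlocks 0 1 (-1) 0
    let A : Matrix (Fin n ⊕ Fin n) (Fin n ⊕ Fin n) ℂ :=
      ((τr ^ (-(1 : ℝ) / 2) : ℝ) : ℂ) • A'
        - (((1 / 2 : ℝ) * τr ^ (-(3 : ℝ) / 2) : ℝ) : ℂ) • Matrix.vecMulVec b (star b)
    Aᵀ * S * A = S := by
  intro sxz ψ₁r ψ₂r τr τ₀r ψ₁ ψ₂ τ τ₀ a11 a12 a21 a22 A' b S A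
  have hψ₁ : 0 < ψ₁r :=
    add_pos_of_nonneg_of_pos (Finset.sum_nonneg fun i _ => Complex.normSq_nonneg _) one_pos
  have hτ : 0 < τr := mul_pos hψ₁ (sum_normSq_add_normSq_sub_pos hs ξ z)
  have hz : z ⬝ᵥ star z = ψ₁ - 1 := by
    simp only [ψ₁, ψ₁r, Complex.ofReal_add, Complex.ofReal_one, Complex.ofReal_sum_normSq,
      add_sub_cancel_right]
  have hξ : ξ ⬝ᵥ star ξ = ψ₂ - sxz * star sxz := by
    simp only [ψ₂, ψ₂r, Complex.ofReal_add, Complex.ofReal_sum_normSq, Complex.star_def,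
      Complex.mul_conj, add_sub_cancel_right]
  have hb : star b = ansatzVector (star z) z (star ξ) ξ sxz ψ₁ ψ₂ := by
    ext (i | i) <;> simp [b, ansatzVector, ψ₁, ψ₂]
  have hc : ((τr ^ (-(1 : ℝ) / 2) : ℝ) : ℂ) ^ 2 * (ψ₁ * ψ₂) = 1 := by
    rw [show ψ₁ * ψ₂ = (τr : ℂ) from (Complex.ofReal_mul ψ₁r ψ₂r).symm]
    exact_mod_cast Real.rpow_neg_one_half_sq_mul hτ
  have hd : 2 * (((1 / 2 : ℝ) * τr ^ (-(3 : ℝ) / 2) : ℝ) : ℂ) =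
      ((τr ^ (-(1 : ℝ) / 2) : ℝ) : ℂ) ^ 3 := by
    rw [Real.rpow_neg_three_halves hτ.le]
    push_cast
    ring
  have hA := ansatz_mem_symplecticGroup hz hξ hc hd
  rw [← hb, SymplecticGroup.mem_iff'] at hA
  have hS : S = -J (Fin n) ℂ := by simp [S, J, fromBlocks_neg]
  simp only [hS, Matrix.mul_neg, Matrix.neg_mul, neg_inj]
  exact hA

theorem stmt_7 (n : ℕ) (hn : 1 ≤ n) (s : ℂ) (hs : s ≠ 0) (z ξ : Fin n → ℂ) :
    let sxz : ℂ := s - ∑ i, ξ i * z i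
    let ψ₁r : ℝ := (∑ i, Complex.normSq (z i)) + 1
    let ψ₂r : ℝ := (∑ i, Complex.normSq (ξ i)) + Complex.normSq sxz
    let τr : ℝ := ψ₁r * ψ₂r
    let τ₀r : ℝ := Complex.normSq s
    let ψ₁ : ℂ := (ψ₁r : ℂ)
    let ψ₂ : ℂ := (ψ₂r : ℂ)
    let τ : ℂ := (τr : ℂ)
    let τ₀ : ℂ := (τ₀r : ℂ)
    let a11 : Matrix (Fin n) (Fin n) ℂ :=
      ψ₂ • 1 - sxz • Matrix.vecMulVec (star z) (star ξ)
        - star sxz • Matrix.vecMulVec ξ z + ψ₁ • Matrix.vecMulVec ξ (star ξ)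
    let a12 : Matrix (Fin n) (Fin n) ℂ :=
      ψ₁ • Matrix.vecMulVec ξ (star z) + Matrix.vecMulVec (star z) ξ
        - sxz • Matrix.vecMulVec (star z) (star z)
    let a21 : Matrix (Fin n) (Fin n) ℂ :=
      ψ₁ • Matrix.vecMulVec z (star ξ) + Matrix.vecMulVec (star ξ) z
        - star sxz • Matrix.vecMulVec z z
    let a22 : Matrix (Fin n) (Fin n) ℂ := ψ₁ • (1 + Matrix.vecMulVec z (star z))
    let A' : Matrix (Fin n ⊕ Fin n) (Fin n ⊕ Fin n) ℂ := Matrix.fromBlocks a11 a12 a21 a22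
    let b : Fin n ⊕ Fin n → ℂ :=
      Sum.elim (fun i => ψ₂ * star (z i) - ψ₁ * star sxz * ξ i)
               (fun i => ψ₁ * (star (ξ i) - star sxz * z i))
    let S : Matrix (Fin n ⊕ Fin n) (Fin n ⊕ Fin n) ℂ := Matrix.fromBlocks 0 1 (-1) 0
    let A : Matrix (Fin n ⊕ Fin n) (Fin n ⊕ Fin n) ℂ :=
      ((τr ^ (-(1 : ℝ) / 2) : ℝ) : ℂ) • A'
        - (((1 / 2 : ℝ) * τr ^ (-(3 : ℝ) / 2) : ℝ) : ℂ) • Matrix.vecMulVec b (star b)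
    Aᵀ * S * A = S :=
  stmt_7_general n s hs z ξ
end

section
/- For every u ∈ ℂ, det(u·1ₙ + A) = u^{n−2}·( u² + u·trace(Λ) + det(Λ) ). -/
/-!
Write `A = M * N`, where `M` is the `n × 2` matrix with columns `Z₁, Z₂` and `N` the `2 × n` matrix
with rows `W₁, W₂`, so that `N * M = Λ`. Since `det (u • 1 + B) = χ_{-B}(u)`, Sylvester's identity
`X ^ 2 * χ_{MN} = X ^ n * χ_{NM}` for characteristic polynomials, divided by `X ^ 2` in `ℂ[X]` (so
that `u = 0` needs no separate argument), reduces the `n × n` determinant to the `2 × 2` one.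
-/

open Matrix Polynomial

namespace Matrix

variable {m n ι R : Type*} [CommRing R]

theorem det_smul_one_add_eq_eval_charpoly_neg [Fintype n] [DecidableEq n] (A : Matrix n n R)
    (u : R) :
    (u • (1 : Matrix n n R) + A).det = (-A).charpoly.eval u := by
  rw [eval_charpoly, sub_neg_eq_add, smul_one_eq_diagonal, scalar_apply]

theorem det_smul_one_add_mul_comm_of_le [Fintype m] [Fintype n] [DecidableEq m] [DecidableEq n]
    (M : Matrix m n R) (N : Matrix n m R) (hle : Fintype.card n ≤ Fintype.card m) (u : R) :
    (u • (1 : Matrix m m R) + M * N).det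
      = u ^ (Fintype.card m - Fintype.card n) * (u • (1 : Matrix n n R) + N * M).det := by
  rw [det_smul_one_add_eq_eval_charpoly_neg, det_smul_one_add_eq_eval_charpoly_neg,
    ← Matrix.neg_mul, charpoly_mul_comm_of_le _ _ hle, Matrix.mul_neg, eval_mul, eval_pow, eval_X]

theorem det_smul_one_add_fin_two [Nontrivial R] (B : Matrix (Fin 2) (Fin 2) R) (u : R) :
    (u • (1 : Matrix (Fin 2) (Fin 2) R) + B).det = u ^ 2 + u * B.trace + B.det := by
  rw [det_smul_one_add_eq_eval_charpoly_neg, charpoly_fin_two, trace_neg, det_neg]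
  simp only [map_neg, neg_mul, sub_neg_eq_add, Fintype.card_fin, neg_one_sq, one_mul, eval_add,
    eval_pow, eval_mul, eval_X, eval_C]
  ring

theorem sum_vecMulVec_eq_transpose_mul [Fintype ι] (Z W : ι → n → R) :
    ∑ i, vecMulVec (Z i) (W i) = (of Z)ᵀ * of W := by
  ext j k
  simp [sum_apply, mul_apply, vecMulVec_apply]

theorem of_mul_transpose_of [Fintype n] (Z W : ι → n → R) :
    of W * (of Z)ᵀ = of fun i j => W i ⬝ᵥ Z j := by
  ext i j
  simp [mul_apply, dotProduct]

end Matrix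

theorem stmt_9 (n : ℕ) (hn : 2 ≤ n) (Z₁ Z₂ W₁ W₂ : Fin n → ℂ) :
    let A : Matrix (Fin n) (Fin n) ℂ := vecMulVec Z₁ W₁ + vecMulVec Z₂ W₂
    let Λ : Matrix (Fin 2) (Fin 2) ℂ :=
      !![W₁ ⬝ᵥ Z₁, W₁ ⬝ᵥ Z₂; W₂ ⬝ᵥ Z₁, W₂ ⬝ᵥ Z₂]
    ∀ u : ℂ, (u • (1 : Matrix (Fin n) (Fin n) ℂ) + A).det
      = u ^ (n - 2) * (u ^ 2 + u * Λ.trace + Λ.det) := by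
  intro A Λ u
  have hA : A = (of ![Z₁, Z₂])ᵀ * of ![W₁, W₂] := by
    rw [← sum_vecMulVec_eq_transpose_mul, Fin.sum_univ_two]
    rfl
  have hΛ : of ![W₁, W₂] * (of ![Z₁, Z₂])ᵀ = Λ := by
    rw [of_mul_transpose_of]
    ext i j
    fin_cases i <;> fin_cases j <;> rfl
  rw [hA, det_smul_one_add_mul_comm_of_le _ _ (by simpa using hn), hΛ,
    det_smul_one_add_fin_two, Fintype.card_fin, Fintype.card_fin]
end

section
/- Assume s ≠ 0. Then the Schur complement a₁₁ − a₁₂·a₂₂⁻¹·a₂₁ is invertible and the scalar (b₁ − a₁₂·a₂₂⁻¹·b₂)* · (a₁₁ − a₁₂·a₂₂⁻¹·a₂₁)⁻¹ · (b₁ − a₁₂·a₂₂⁻¹·b₂) equals τ₀·(τ − τ₀)/(2τ − τ₀), where τ = ψ₁ψ₂ and τ₀ = |s|². -/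
/-!
All matrices in play are multiples of the identity plus rank-one terms built from `z̄, ξ, z, ξ̄`,
and products of such terms only produce the four pairings `z*z = ψ₁ - 1`, `ξξ* = ψ₂ - |s_xz|²`,
`ξz = s - s_xz` and its conjugate. So `a₂₂` is inverted by Sherman–Morrison, the Schur complement
and a multiple of its inverse are explicit in the same span, and the quadratic form collapses to a
scalar identity. The only analytic input is Cauchy–Schwarz for `(1, z)` and `(s_xz, ξ)`, whose
pairing is `s`: it gives `τ₀ ≤ τ`, hence `ψ₂ > 0` and `2τ - τ₀ > 0` once `s ≠ 0`.
-/

open Matrix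

theorem Matrix.one_add_vecMulVec_mul_one_sub {ι K : Type*} [Fintype ι] [DecidableEq ι] [Field K]
    {u v : ι → K} (h : 1 + v ⬝ᵥ u ≠ 0) :
    (1 + vecMulVec u v) * (1 - (1 + v ⬝ᵥ u)⁻¹ • vecMulVec u v) = 1 := by
  rw [Matrix.mul_sub, Matrix.mul_one, Matrix.mul_smul, Matrix.add_mul, Matrix.one_mul,
    vecMulVec_mul_vecMulVec, vecMulVec_smul]
  match_scalars
  · ring
  · field_simp; ring

noncomputable section

namespace SchurQuadForm

variable {ι : Type*} [Fintype ι] (s : ℂ) (z ξ : ι → ℂ)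

def sxz : ℂ := s - ∑ i, ξ i * z i

def ψ₁ : ℝ := (∑ i, Complex.normSq (z i)) + 1

def ψ₂ : ℝ := (∑ i, Complex.normSq (ξ i)) + Complex.normSq (sxz s z ξ)

theorem normSq_le_ψ₁_mul_ψ₂ : Complex.normSq s ≤ ψ₁ z * ψ₂ s z ξ := by
  have htri : ‖s‖ ≤ 1 * ‖sxz s z ξ‖ + ∑ i, ‖z i‖ * ‖ξ i‖ :=
    calc ‖s‖ = ‖sxz s z ξ + ∑ i, ξ i * z i‖ := by rw [sxz, sub_add_cancel]
      _ ≤ ‖sxz s z ξ‖ + ∑ i, ‖ξ i * z i‖ :=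
        (norm_add_le _ _).trans (by gcongr; exact norm_sum_le _ _)
      _ = _ := by simp only [one_mul, norm_mul, mul_comm]
  have hcs := Finset.sum_mul_sq_le_sq_mul_sq Finset.univ
    (fun o : Option ι => o.elim 1 (‖z ·‖)) (fun o => o.elim ‖sxz s z ξ‖ (‖ξ ·‖))
  simp only [Fintype.sum_option, Option.elim, one_pow] at hcs
  simp only [ψ₁, ψ₂, ← Complex.sq_norm]
  calc ‖s‖ ^ 2 ≤ _ := pow_le_pow_left₀ (norm_nonneg s) htri 2
    _ ≤ _ := hcs
    _ = _ := by ring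

theorem ψ₁_pos : 0 < ψ₁ z :=
  add_pos_of_nonneg_of_pos (Finset.sum_nonneg fun _ _ => Complex.normSq_nonneg _) one_pos

theorem ofReal_ψ₁_ne_zero : (ψ₁ z : ℂ) ≠ 0 :=
  Complex.ofReal_ne_zero.mpr (ψ₁_pos z).ne'

variable {s} in
theorem ofReal_ψ₂_ne_zero (hs : s ≠ 0) : (ψ₂ s z ξ : ℂ) ≠ 0 := by
  have h := (Complex.normSq_pos.mpr hs).trans_le (normSq_le_ψ₁_mul_ψ₂ s z ξ)
  exact Complex.ofReal_ne_zero.mpr (pos_of_mul_pos_right h (ψ₁_pos z).le).ne'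

variable {s} in
theorem two_mul_ψ₁_mul_ψ₂_sub_ne_zero (hs : s ≠ 0) :
    (2 * ψ₁ z * ψ₂ s z ξ - s * star s : ℂ) ≠ 0 := by
  have hlt : Complex.normSq s < 2 * (ψ₁ z * ψ₂ s z ξ) := by
    linarith [Complex.normSq_pos.mpr hs, normSq_le_ψ₁_mul_ψ₂ s z ξ]
  have h := Complex.ofReal_ne_zero.mpr (sub_pos.mpr hlt).ne'
  rwa [Complex.ofReal_sub, Complex.ofReal_mul, Complex.ofReal_mul, ← Complex.mul_conj,
    ← mul_assoc, Complex.ofReal_ofNat] at h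

theorem star_z_dotProduct_z : star z ⬝ᵥ z = ψ₁ z - 1 := by
  simp [ψ₁, dotProduct, Complex.normSq_eq_conj_mul_self]

theorem star_ξ_dotProduct_ξ : star ξ ⬝ᵥ ξ = ψ₂ s z ξ - sxz s z ξ * star (sxz s z ξ) := by
  simp [ψ₂, dotProduct, Complex.normSq_eq_conj_mul_self, Complex.mul_conj]

theorem ξ_dotProduct_z : ξ ⬝ᵥ z = s - sxz s z ξ := by
  rw [sxz, sub_sub_cancel]; rfl

theorem star_z_dotProduct_star_ξ : star z ⬝ᵥ star ξ = star s - star (sxz s z ξ) := by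
  rw [dotProduct_comm, ← star_sub, ← ξ_dotProduct_z]
  simp [dotProduct, mul_comm]

variable [DecidableEq ι]

def a11 : Matrix ι ι ℂ :=
  (ψ₂ s z ξ : ℂ) • 1 - sxz s z ξ • vecMulVec (star z) (star ξ)
    - star (sxz s z ξ) • vecMulVec ξ z + (ψ₁ z : ℂ) • vecMulVec ξ (star ξ)

def a12 : Matrix ι ι ℂ :=
  (ψ₁ z : ℂ) • vecMulVec ξ (star z) + vecMulVec (star z) ξ
    - sxz s z ξ • vecMulVec (star z) (star z)

def a21 : Matrix ι ι ℂ :=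
  (ψ₁ z : ℂ) • vecMulVec z (star ξ) + vecMulVec (star ξ) z
    - star (sxz s z ξ) • vecMulVec z z

def a22 : Matrix ι ι ℂ := (ψ₁ z : ℂ) • (1 + vecMulVec z (star z))

def b1 : ι → ℂ := fun i => ψ₂ s z ξ * star (z i) - ψ₁ z * star (sxz s z ξ) * ξ i

def b2 : ι → ℂ := fun i => ψ₁ z * (star (ξ i) - star (sxz s z ξ) * z i)

def schur : Matrix ι ι ℂ := a11 s z ξ - a12 s z ξ * (a22 z)⁻¹ * a21 s z ξ

def reducedRhs : ι → ℂ := b1 s z ξ - (a12 s z ξ * (a22 z)⁻¹) *ᵥ b2 s z ξ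

def scaledSchurInv : Matrix ι ι ℂ :=
  (2 * ψ₁ z * ψ₂ s z ξ - s * star s : ℂ) • 1
    + ((ψ₁ z : ℂ) * sxz s z ξ) • vecMulVec (star z) (star ξ)
    + (2 * ψ₁ z * ψ₂ s z ξ - s * star s - ψ₁ z * sxz s z ξ * star (sxz s z ξ) : ℂ) •
      vecMulVec (star z) z
    - (ψ₁ z : ℂ) • vecMulVec ξ (star ξ) + ((ψ₁ z : ℂ) * star (sxz s z ξ)) • vecMulVec ξ z

theorem inv_a22 : (a22 z)⁻¹ = (ψ₁ z : ℂ)⁻¹ • (1 - (ψ₁ z : ℂ)⁻¹ • vecMulVec z (star z)) := by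
  have h1 : 1 + star z ⬝ᵥ z = ψ₁ z := by rw [star_z_dotProduct_z, add_sub_cancel]
  refine inv_eq_right_inv ?_
  rw [a22, Matrix.smul_mul, Matrix.mul_smul, smul_smul, mul_inv_cancel₀ (ofReal_ψ₁_ne_zero z),
    one_smul, ← h1, Matrix.one_add_vecMulVec_mul_one_sub (h1 ▸ ofReal_ψ₁_ne_zero z)]

theorem sq_ψ₁_smul_schur :
    ((ψ₁ z : ℂ) ^ 2) • schur s z ξ =
      ((ψ₁ z : ℂ) ^ 2 * ψ₂ s z ξ) • 1 - (s * ψ₁ z) • vecMulVec (star z) (star ξ)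
        - ((ψ₁ z : ℂ) * ψ₂ s z ξ - s * star s) • vecMulVec (star z) z
        + ((ψ₁ z : ℂ) ^ 2) • vecMulVec ξ (star ξ) - (star s * ψ₁ z) • vecMulVec ξ z := by
  have hψ₁ := ofReal_ψ₁_ne_zero z
  rw [schur, inv_a22, a11, a12, a21]
  simp only [Matrix.smul_mul, Matrix.mul_smul, Matrix.mul_sub, Matrix.mul_add,
    Matrix.add_mul, Matrix.sub_mul, Matrix.mul_one, vecMulVec_mul_vecMulVec,
    vecMulVec_smul, smul_smul, smul_add, smul_sub, dotProduct_comm ξ (star ξ),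
    star_z_dotProduct_z z, star_ξ_dotProduct_ξ s z ξ, ξ_dotProduct_z s z ξ,
    star_z_dotProduct_star_ξ s z ξ]
  match_scalars <;> field_simp <;> ring

theorem schur_mul_scaledSchurInv :
    schur s z ξ * scaledSchurInv s z ξ =
      ((ψ₂ s z ξ : ℂ) * (2 * ψ₁ z * ψ₂ s z ξ - s * star s)) • 1 := by
  have hψ₁ := ofReal_ψ₁_ne_zero z
  rw [← (inv_smul_eq_iff₀ (pow_ne_zero 2 hψ₁)).mpr (sq_ψ₁_smul_schur s z ξ).symm,
    scaledSchurInv]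
  simp only [Matrix.smul_mul, Matrix.mul_smul, Matrix.mul_sub, Matrix.mul_add,
    Matrix.add_mul, Matrix.sub_mul, Matrix.mul_one, Matrix.one_mul, vecMulVec_mul_vecMulVec,
    vecMulVec_smul, smul_smul, smul_add, smul_sub, dotProduct_comm z (star z),
    dotProduct_comm z ξ, dotProduct_comm (star ξ) (star z),
    star_z_dotProduct_z z, star_ξ_dotProduct_ξ s z ξ, ξ_dotProduct_z s z ξ,
    star_z_dotProduct_star_ξ s z ξ]
  match_scalars <;> field_simp <;> ring

variable {s} in
theorem schur_mul_inv_smul_scaledSchurInv (hs : s ≠ 0) :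
    schur s z ξ * (((ψ₂ s z ξ : ℂ) * (2 * ψ₁ z * ψ₂ s z ξ - s * star s))⁻¹ •
      scaledSchurInv s z ξ) = 1 := by
  rw [Matrix.mul_smul, schur_mul_scaledSchurInv, smul_smul,
    inv_mul_cancel₀ (mul_ne_zero (ofReal_ψ₂_ne_zero z ξ hs)
      (two_mul_ψ₁_mul_ψ₂_sub_ne_zero z ξ hs)), one_smul]

variable {s} in
theorem isUnit_schur (hs : s ≠ 0) : IsUnit (schur s z ξ) :=
  IsUnit.of_mul_eq_one _ (schur_mul_inv_smul_scaledSchurInv z ξ hs)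

theorem ψ₁_smul_reducedRhs :
    (ψ₁ z : ℂ) • reducedRhs s z ξ = (s * star s) • star z - ((ψ₁ z : ℂ) * star s) • ξ := by
  have hψ₁ := ofReal_ψ₁_ne_zero z
  have hb1 : b1 s z ξ = (ψ₂ s z ξ : ℂ) • star z - ((ψ₁ z : ℂ) * star (sxz s z ξ)) • ξ := rfl
  have hb2 : b2 s z ξ = (ψ₁ z : ℂ) • star ξ - ((ψ₁ z : ℂ) * star (sxz s z ξ)) • z := by
    ext i; simp only [b2, Pi.sub_apply, Pi.smul_apply, Pi.star_apply, smul_eq_mul]; ring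
  rw [reducedRhs, hb1, hb2, inv_a22, a12]
  simp only [Matrix.smul_mul, Matrix.mul_smul, Matrix.mul_sub,
    Matrix.add_mul, Matrix.sub_mul, Matrix.mul_one, vecMulVec_mul_vecMulVec,
    vecMulVec_smul, smul_smul, smul_add, smul_sub, Matrix.add_mulVec, Matrix.sub_mulVec,
    Matrix.smul_mulVec, vecMulVec_mulVec, op_smul_eq_smul, Matrix.mulVec_smul,
    Matrix.mulVec_sub, dotProduct_comm ξ (star ξ),
    star_z_dotProduct_z z, star_ξ_dotProduct_ξ s z ξ, ξ_dotProduct_z s z ξ,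
    star_z_dotProduct_star_ξ s z ξ]
  match_scalars <;> field_simp <;> ring

theorem star_reducedRhs_dotProduct_scaledSchurInv_mulVec :
    star (reducedRhs s z ξ) ⬝ᵥ (scaledSchurInv s z ξ *ᵥ reducedRhs s z ξ) =
      ψ₂ s z ξ * (s * star s) * (ψ₁ z * ψ₂ s z ξ - s * star s) := by
  have hψ₁ := ofReal_ψ₁_ne_zero z
  have hv := (eq_inv_smul_iff₀ hψ₁).mpr (ψ₁_smul_reducedRhs s z ξ)
  have hstar : star (reducedRhs s z ξ) =
      (ψ₁ z : ℂ)⁻¹ • ((star s * s) • z - ((ψ₁ z : ℂ) * s) • star ξ) := by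
    rw [hv]
    simp [star_smul, star_sub, Complex.conj_ofReal]
  rw [hstar, hv, scaledSchurInv]
  simp only [Matrix.add_mulVec, Matrix.sub_mulVec, Matrix.smul_mulVec, vecMulVec_mulVec,
    op_smul_eq_smul, Matrix.one_mulVec, Matrix.mulVec_smul, Matrix.mulVec_sub, dotProduct_smul,
    dotProduct_sub, dotProduct_add, smul_dotProduct, sub_dotProduct, smul_eq_mul,
    dotProduct_comm z (star z), dotProduct_comm z ξ, dotProduct_comm (star ξ) (star z),
    star_z_dotProduct_z z, star_ξ_dotProduct_ξ s z ξ, ξ_dotProduct_z s z ξ,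
    star_z_dotProduct_star_ξ s z ξ]
  field_simp
  ring

variable {s} in
theorem star_reducedRhs_dotProduct_inv_schur_mulVec (hs : s ≠ 0) :
    star (reducedRhs s z ξ) ⬝ᵥ ((schur s z ξ)⁻¹ *ᵥ reducedRhs s z ξ) =
      (Complex.normSq s : ℂ) * (((ψ₁ z * ψ₂ s z ξ : ℝ) : ℂ) - Complex.normSq s) /
        (2 * ((ψ₁ z * ψ₂ s z ξ : ℝ) : ℂ) - Complex.normSq s) := by
  have hψ₂ := ofReal_ψ₂_ne_zero z ξ hs
  have hd := two_mul_ψ₁_mul_ψ₂_sub_ne_zero z ξ hs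
  rw [inv_eq_right_inv (schur_mul_inv_smul_scaledSchurInv z ξ hs), Matrix.smul_mulVec,
    dotProduct_smul, star_reducedRhs_dotProduct_scaledSchurInv_mulVec, smul_eq_mul,
    show (Complex.normSq s : ℂ) = s * star s from (Complex.mul_conj s).symm, Complex.ofReal_mul,
    ← mul_assoc]
  field_simp

end SchurQuadForm

end

theorem stmt_16_general (n : ℕ) (s : ℂ) (hs : s ≠ 0) (z ξ : Fin n → ℂ) :
    let sxz : ℂ := s - ∑ i, ξ i * z i
    let ψ₁r : ℝ := (∑ i, Complex.normSq (z i)) + 1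
    let ψ₂r : ℝ := (∑ i, Complex.normSq (ξ i)) + Complex.normSq sxz
    let τr : ℝ := ψ₁r * ψ₂r
    let τ₀r : ℝ := Complex.normSq s
    let ψ₁ : ℂ := (ψ₁r : ℂ)
    let ψ₂ : ℂ := (ψ₂r : ℂ)
    let τ : ℂ := (τr : ℂ)
    let τ₀ : ℂ := (τ₀r : ℂ)
    let a11 : Matrix (Fin n) (Fin n) ℂ :=
      ψ₂ • 1 - sxz • Matrix.vecMulVec (star z) (star ξ)
        - star sxz • Matrix.vecMulVec ξ z + ψ₁ • Matrix.vecMulVec ξ (star ξ)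
    let a12 : Matrix (Fin n) (Fin n) ℂ :=
      ψ₁ • Matrix.vecMulVec ξ (star z) + Matrix.vecMulVec (star z) ξ
        - sxz • Matrix.vecMulVec (star z) (star z)
    let a21 : Matrix (Fin n) (Fin n) ℂ :=
      ψ₁ • Matrix.vecMulVec z (star ξ) + Matrix.vecMulVec (star ξ) z
        - star sxz • Matrix.vecMulVec z z
    let a22 : Matrix (Fin n) (Fin n) ℂ := ψ₁ • (1 + Matrix.vecMulVec z (star z))
    let A' : Matrix (Fin n ⊕ Fin n) (Fin n ⊕ Fin n) ℂ := Matrix.fromBlocks a11 a12 a21 a22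
    let b : Fin n ⊕ Fin n → ℂ :=
      Sum.elim (fun i => ψ₂ * star (z i) - ψ₁ * star sxz * ξ i)
               (fun i => ψ₁ * (star (ξ i) - star sxz * z i))
    let b1 : Fin n → ℂ := fun i => ψ₂ * star (z i) - ψ₁ * star sxz * ξ i
    let b2 : Fin n → ℂ := fun i => ψ₁ * (star (ξ i) - star sxz * z i)
    let Sc : Matrix (Fin n) (Fin n) ℂ := a11 - a12 * a22⁻¹ * a21
    let v : Fin n → ℂ := b1 - (a12 * a22⁻¹) *ᵥ b2
    IsUnit Sc ∧ star v ⬝ᵥ (Sc⁻¹ *ᵥ v) = τ₀ * (τ - τ₀) / (2 * τ - τ₀) := by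
  exact ⟨SchurQuadForm.isUnit_schur z ξ hs,
    SchurQuadForm.star_reducedRhs_dotProduct_inv_schur_mulVec z ξ hs⟩

theorem stmt_16 (n : ℕ) (hn : 1 ≤ n) (s : ℂ) (hs : s ≠ 0) (z ξ : Fin n → ℂ) :
    let sxz : ℂ := s - ∑ i, ξ i * z i
    let ψ₁r : ℝ := (∑ i, Complex.normSq (z i)) + 1
    let ψ₂r : ℝ := (∑ i, Complex.normSq (ξ i)) + Complex.normSq sxz
    let τr : ℝ := ψ₁r * ψ₂r
    let τ₀r : ℝ := Complex.normSq s
    let ψ₁ : ℂ := (ψ₁r : ℂ)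
    let ψ₂ : ℂ := (ψ₂r : ℂ)
    let τ : ℂ := (τr : ℂ)
    let τ₀ : ℂ := (τ₀r : ℂ)
    let a11 : Matrix (Fin n) (Fin n) ℂ :=
      ψ₂ • 1 - sxz • Matrix.vecMulVec (star z) (star ξ)
        - star sxz • Matrix.vecMulVec ξ z + ψ₁ • Matrix.vecMulVec ξ (star ξ)
    let a12 : Matrix (Fin n) (Fin n) ℂ :=
      ψ₁ • Matrix.vecMulVec ξ (star z) + Matrix.vecMulVec (star z) ξ
        - sxz • Matrix.vecMulVec (star z) (star z)
    let a21 : Matrix (Fin n) (Fin n) ℂ :=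
      ψ₁ • Matrix.vecMulVec z (star ξ) + Matrix.vecMulVec (star ξ) z
        - star sxz • Matrix.vecMulVec z z
    let a22 : Matrix (Fin n) (Fin n) ℂ := ψ₁ • (1 + Matrix.vecMulVec z (star z))
    let A' : Matrix (Fin n ⊕ Fin n) (Fin n ⊕ Fin n) ℂ := Matrix.fromBlocks a11 a12 a21 a22
    let b : Fin n ⊕ Fin n → ℂ :=
      Sum.elim (fun i => ψ₂ * star (z i) - ψ₁ * star sxz * ξ i)
               (fun i => ψ₁ * (star (ξ i) - star sxz * z i))
    let b1 : Fin n → ℂ := fun i => ψ₂ * star (z i) - ψ₁ * star sxz * ξ i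
    let b2 : Fin n → ℂ := fun i => ψ₁ * (star (ξ i) - star sxz * z i)
    let Sc : Matrix (Fin n) (Fin n) ℂ := a11 - a12 * a22⁻¹ * a21
    let v : Fin n → ℂ := b1 - (a12 * a22⁻¹) *ᵥ b2
    IsUnit Sc ∧ star v ⬝ᵥ (Sc⁻¹ *ᵥ v) = τ₀ * (τ - τ₀) / (2 * τ - τ₀) :=
  stmt_16_general n s hs z ξ
end

section
/- a₁₁ᵀ·a₂₁ − a₂₁ᵀ·a₁₁ = ( s_xz·conj(ξz) − ‖ξ‖² )·( z·ξ̄ − ξ*·zᵀ ). (This is the (1,1)-block of A'ᵀ·S·A' for the 2n×2n matrix A' with blocks [[a₁₁,a₁₂],[a₂₁,a₂₂]] and S = [[0,1ₙ],[−1ₙ,0]].) -/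
open Matrix

/-!
Every summand of `a₁₁` and `a₂₁` except `ψ₂ • 1` is a rank-one matrix, and
`vecMulVec u v * vecMulVec w x = (v ⬝ᵥ w) • vecMulVec u x`. Hence the identity is a polynomial
identity over any commutative ring, with `star z`, `star ξ`, `conj s_xz` replaced by independent
vectors `p`, `q` and a scalar `σ'`. Only the coefficient of `vecMulVec z q - vecMulVec q z`
survives, and it collapses to `s_xz · conj (ξz) - ‖ξ‖²` once `ψ₁ - 1 = z ⬝ᵥ z̄` and
`ψ₂ = ‖ξ‖² + |s_xz|²` are substituted.
-/

section RankOne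

variable {R n : Type*} [CommRing R] [Fintype n] [DecidableEq n]

theorem transpose_mul_sub_transpose_mul_of_rankOne (z ξ p q : n → R) (ψ₁ ψ₂ σ σ' : R) :
    let a₁₁ : Matrix n n R :=
      ψ₂ • 1 - σ • vecMulVec p q - σ' • vecMulVec ξ z + ψ₁ • vecMulVec ξ q
    let a₂₁ : Matrix n n R := ψ₁ • vecMulVec z q + vecMulVec q z - σ' • vecMulVec z z
    a₁₁ᵀ * a₂₁ - a₂₁ᵀ * a₁₁ =
      ((ψ₁ - 1) * ψ₂ - ψ₁ * (ξ ⬝ᵥ q) - σ * σ' * (z ⬝ᵥ p) + σ * (p ⬝ᵥ q)) •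
        (vecMulVec z q - vecMulVec q z) := by
  intro a₁₁ a₂₁
  simp only [a₁₁, a₂₁, transpose_add, transpose_sub, transpose_smul, transpose_one,
    transpose_vecMulVec, Matrix.add_mul, Matrix.sub_mul, Matrix.mul_add, Matrix.mul_sub,
    Matrix.smul_mul, Matrix.mul_smul, Matrix.one_mul, Matrix.mul_one,
    vecMulVec_mul_vecMulVec, vecMulVec_smul]
  simp only [dotProduct_comm q p, dotProduct_comm q ξ, dotProduct_comm ξ z, dotProduct_comm p z]
  module

end RankOne

theorem dotProduct_star_self_eq_sum_normSq {n : Type*} [Fintype n] (v : n → ℂ) :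
    v ⬝ᵥ star v = ((∑ i, Complex.normSq (v i) : ℝ) : ℂ) := by
  push_cast
  exact Finset.sum_congr rfl fun i _ => Complex.mul_conj (v i)

theorem stmt_18_general (n : ℕ) (s : ℂ) (z ξ : Fin n → ℂ) :
    let sxz : ℂ := s - ∑ i, ξ i * z i
    let ψ₁r : ℝ := (∑ i, Complex.normSq (z i)) + 1
    let ψ₂r : ℝ := (∑ i, Complex.normSq (ξ i)) + Complex.normSq sxz
    let τr : ℝ := ψ₁r * ψ₂r
    let τ₀r : ℝ := Complex.normSq s
    let ψ₁ : ℂ := (ψ₁r : ℂ)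
    let ψ₂ : ℂ := (ψ₂r : ℂ)
    let τ : ℂ := (τr : ℂ)
    let τ₀ : ℂ := (τ₀r : ℂ)
    let a11 : Matrix (Fin n) (Fin n) ℂ :=
      ψ₂ • 1 - sxz • Matrix.vecMulVec (star z) (star ξ)
        - star sxz • Matrix.vecMulVec ξ z + ψ₁ • Matrix.vecMulVec ξ (star ξ)
    let a12 : Matrix (Fin n) (Fin n) ℂ :=
      ψ₁ • Matrix.vecMulVec ξ (star z) + Matrix.vecMulVec (star z) ξ
        - sxz • Matrix.vecMulVec (star z) (star z)
    let a21 : Matrix (Fin n) (Fin n) ℂ :=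
      ψ₁ • Matrix.vecMulVec z (star ξ) + Matrix.vecMulVec (star ξ) z
        - star sxz • Matrix.vecMulVec z z
    let a22 : Matrix (Fin n) (Fin n) ℂ := ψ₁ • (1 + Matrix.vecMulVec z (star z))
    let A' : Matrix (Fin n ⊕ Fin n) (Fin n ⊕ Fin n) ℂ := Matrix.fromBlocks a11 a12 a21 a22
    let b : Fin n ⊕ Fin n → ℂ :=
      Sum.elim (fun i => ψ₂ * star (z i) - ψ₁ * star sxz * ξ i)
               (fun i => ψ₁ * (star (ξ i) - star sxz * z i))
    let ξn : ℂ := ((∑ i, Complex.normSq (ξ i) : ℝ) : ℂ)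
    a11ᵀ * a21 - a21ᵀ * a11
      = (sxz * star (∑ i, ξ i * z i) - ξn) •
          (Matrix.vecMulVec z (star ξ) - Matrix.vecMulVec (star ξ) z) := by
  intro sxz ψ₁r ψ₂r _ _ ψ₁ ψ₂ _ _ a11 _ a21 _ _ _ ξn
  refine (transpose_mul_sub_transpose_mul_of_rankOne z ξ (star z) (star ξ) ψ₁ ψ₂ sxz
    (star sxz)).trans (congrArg (· • _) ?_)
  have hz : z ⬝ᵥ star z = ψ₁ - 1 := by
    rw [dotProduct_star_self_eq_sum_normSq]
    simp [ψ₁, ψ₁r]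
  have hξ : ξ ⬝ᵥ star ξ = ξn := dotProduct_star_self_eq_sum_normSq ξ
  have hψ₂ : ψ₂ = ξn + sxz * star sxz := by
    simp [ψ₂, ψ₂r, ξn, Complex.mul_conj]
  have hconj : star (∑ i, ξ i * z i) = star z ⬝ᵥ star ξ := (star_dotProduct_star z ξ).symm
  rw [hz, hξ, hψ₂, hconj]
  ring

theorem stmt_18 (n : ℕ) (hn : 1 ≤ n) (s : ℂ) (z ξ : Fin n → ℂ) :
    let sxz : ℂ := s - ∑ i, ξ i * z i
    let ψ₁r : ℝ := (∑ i, Complex.normSq (z i)) + 1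
    let ψ₂r : ℝ := (∑ i, Complex.normSq (ξ i)) + Complex.normSq sxz
    let τr : ℝ := ψ₁r * ψ₂r
    let τ₀r : ℝ := Complex.normSq s
    let ψ₁ : ℂ := (ψ₁r : ℂ)
    let ψ₂ : ℂ := (ψ₂r : ℂ)
    let τ : ℂ := (τr : ℂ)
    let τ₀ : ℂ := (τ₀r : ℂ)
    let a11 : Matrix (Fin n) (Fin n) ℂ :=
      ψ₂ • 1 - sxz • Matrix.vecMulVec (star z) (star ξ)
        - star sxz • Matrix.vecMulVec ξ z + ψ₁ • Matrix.vecMulVec ξ (star ξ)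
    let a12 : Matrix (Fin n) (Fin n) ℂ :=
      ψ₁ • Matrix.vecMulVec ξ (star z) + Matrix.vecMulVec (star z) ξ
        - sxz • Matrix.vecMulVec (star z) (star z)
    let a21 : Matrix (Fin n) (Fin n) ℂ :=
      ψ₁ • Matrix.vecMulVec z (star ξ) + Matrix.vecMulVec (star ξ) z
        - star sxz • Matrix.vecMulVec z z
    let a22 : Matrix (Fin n) (Fin n) ℂ := ψ₁ • (1 + Matrix.vecMulVec z (star z))
    let A' : Matrix (Fin n ⊕ Fin n) (Fin n ⊕ Fin n) ℂ := Matrix.fromBlocks a11 a12 a21 a22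
    let b : Fin n ⊕ Fin n → ℂ :=
      Sum.elim (fun i => ψ₂ * star (z i) - ψ₁ * star sxz * ξ i)
               (fun i => ψ₁ * (star (ξ i) - star sxz * z i))
    let ξn : ℂ := ((∑ i, Complex.normSq (ξ i) : ℝ) : ℂ)
    a11ᵀ * a21 - a21ᵀ * a11
      = (sxz * star (∑ i, ξ i * z i) - ξn) •
          (Matrix.vecMulVec z (star ξ) - Matrix.vecMulVec (star ξ) z) :=
  stmt_18_general n s z ξ
end
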